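/- arXiv:2303.09365 — 2 statements merged into one kernel-verified Lean document; each statement's English description precedes it below -/
import Mathlib

section
/- There exists a graph Ĥ on 9 vertices such that Kc(Ĥ, χ(Ĥ) + 1) ≥ 2, where χ(Ĥ) is the chromatic number of Ĥ. -/
open SimpleGraph

/-- The spanning subgraph of `G` consisting of the edges both of whose endpoints
receive color `i` or color `j` under `φ`. -/
def kempeSubgraph {V : Type*} (G : SimpleGraph V) {k : ℕ} (φ : V → Fin k) (i j : Fin k) :
    SimpleGraph V where
  Adj u v := G.Adj u v ∧ (φ u = i ∨ φ u = j) ∧ (φ v = i ∨ φ v = j)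
  symm := ⟨fun u v ⟨h, hu, hv⟩ => ⟨h.symm, hv, hu⟩⟩
  loopless := ⟨fun v h => G.loopless.irrefl v h.1⟩

/-- `ψ` is obtained from `φ` by a single `i,j`-Kempe swap:  the colors `i` and `j` are
interchanged on the connected component (of the subgraph induced by colors `i,j`)
containing `w`, and nothing else changes. -/
def IsKempeSwap {V : Type*} (G : SimpleGraph V) {k : ℕ}
    (φ ψ : G.Coloring (Fin k)) : Prop :=
  ∃ (i j : Fin k) (w : V), ∀ v : V,
    ((kempeSubgraph G (fun x => φ x) i j).Reachable w v → ψ v = Equiv.swap i j (φ v)) ∧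
    (¬ (kempeSubgraph G (fun x => φ x) i j).Reachable w v → ψ v = φ v)

/-- Kempe `k`-equivalence of proper `k`-colorings:  one can be transformed into the
other by a sequence of Kempe swaps. -/
def KempeEquiv {V : Type*} (G : SimpleGraph V) (k : ℕ)
    (φ ψ : G.Coloring (Fin k)) : Prop :=
  Relation.EqvGen (IsKempeSwap G) φ ψ

/-- `Kc G k` is the number of Kempe equivalence classes of proper `k`-colorings of `G`. -/
noncomputable def Kc {V : Type*} (G : SimpleGraph V) (k : ℕ) : ℕ :=
  Nat.card (Quot (KempeEquiv G k))

/-- `G` can be obtained from a bipartite graph by adding `ℓ` edges. -/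
def BipartitePlus {V : Type*} (G : SimpleGraph V) (ℓ : ℕ) : Prop :=
  ∃ E : Finset (Sym2 V), E.card = ℓ ∧ ↑E ⊆ G.edgeSet ∧
    (G.deleteEdges ↑E).Colorable 2


/-!
The 4-coloring `hatφ` of the 9-vertex graph `hatH` below is *frozen*: any two of its color
classes induce a connected subgraph. A Kempe swap on a frozen coloring therefore either does
nothing or exchanges two colors everywhere, and the recolored coloring is again frozen; so the
Kempe class of `hatφ` consists of its color permutations, all of which use four colors. Since
`hatH` is 3-colorable (and contains a triangle, so `χ(hatH) = 3`), a 3-coloring read as a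
4-coloring lies in a second class.
-/

section Frozen

variable {V : Type*} {G : SimpleGraph V} {k : ℕ}

def IsFrozen (G : SimpleGraph V) (φ : V → Fin k) : Prop :=
  ∀ i j, i ≠ j → ∀ u v, (φ u = i ∨ φ u = j) → (φ v = i ∨ φ v = j) →
    (kempeSubgraph G φ i j).Reachable u v

instance [DecidableRel G.Adj] (φ : V → Fin k) (i j : Fin k) :
    DecidableRel (kempeSubgraph G φ i j).Adj :=
  fun u v => inferInstanceAs (Decidable (G.Adj u v ∧ _ ∧ _))

lemma kempeSubgraph_perm_comp (φ : V → Fin k) (σ : Equiv.Perm (Fin k)) (i j : Fin k) :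
    kempeSubgraph G (σ ∘ φ) i j = kempeSubgraph G φ (σ.symm i) (σ.symm j) := by
  ext u v
  simp [kempeSubgraph, ← Equiv.eq_symm_apply]

lemma IsFrozen.perm_comp {φ : V → Fin k} (hφ : IsFrozen G φ) (σ : Equiv.Perm (Fin k)) :
    IsFrozen G (σ ∘ φ) := by
  intro i j hij u v hu hv
  rw [kempeSubgraph_perm_comp]
  simp only [Function.comp_apply, ← Equiv.eq_symm_apply] at hu hv
  exact hφ _ _ (σ.symm.injective.ne hij) u v hu hv

lemma eq_of_kempeSubgraph_reachable {φ : V → Fin k} {i j : Fin k} {w v : V}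
    (hw : ¬(φ w = i ∨ φ w = j)) (h : (kempeSubgraph G φ i j).Reachable w v) : w = v := by
  obtain ⟨p⟩ := h
  cases p with
  | nil => rfl
  | cons hadj _ => exact absurd hadj.2.1 hw

lemma swap_apply_eq_or_eq_iff {α : Type*} [DecidableEq α] (i j x : α) :
    (Equiv.swap i j x = i ∨ Equiv.swap i j x = j) ↔ (x = i ∨ x = j) := by
  simp only [Equiv.swap_apply_eq_iff, Equiv.swap_apply_left, Equiv.swap_apply_right, or_comm]

lemma IsKempeSwap.symm {φ ψ : G.Coloring (Fin k)} (h : IsKempeSwap G φ ψ) :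
    IsKempeSwap G ψ φ := by
  obtain ⟨i, j, w, h⟩ := h
  have hcls : ∀ v, (ψ v = i ∨ ψ v = j) ↔ (φ v = i ∨ φ v = j) := by
    intro v
    by_cases hr : (kempeSubgraph G φ i j).Reachable w v
    · rw [(h v).1 hr, swap_apply_eq_or_eq_iff]
    · rw [(h v).2 hr]
  have hK : kempeSubgraph G ψ i j = kempeSubgraph G φ i j := by
    ext u v
    exact and_congr_right fun _ => and_congr (hcls u) (hcls v)
  refine ⟨i, j, w, fun v => ⟨fun hr => ?_, fun hr => ?_⟩⟩
  · rw [hK] at hr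
    rw [(h v).1 hr, Equiv.swap_apply_self]
  · rw [hK] at hr
    exact ((h v).2 hr).symm

lemma IsKempeSwap.exists_perm_of_isFrozen {φ ψ : G.Coloring (Fin k)} (hφ : IsFrozen G φ)
    (h : IsKempeSwap G φ ψ) : ∃ σ : Equiv.Perm (Fin k), ⇑ψ = σ ∘ φ := by
  obtain ⟨i, j, w, h⟩ := h
  by_cases hsw : i ≠ j ∧ (φ w = i ∨ φ w = j)
  · refine ⟨Equiv.swap i j, funext fun v => ?_⟩
    by_cases hr : (kempeSubgraph G φ i j).Reachable w v
    · exact (h v).1 hr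
    · obtain ⟨hvi, hvj⟩ := not_or.mp fun hv => hr (hφ i j hsw.1 w v hsw.2 hv)
      rw [(h v).2 hr, Function.comp_apply, Equiv.swap_apply_of_ne_of_ne hvi hvj]
  · refine ⟨1, funext fun v => ?_⟩
    by_cases hr : (kempeSubgraph G φ i j).Reachable w v
    · rw [(h v).1 hr, Function.comp_apply, Equiv.Perm.one_apply]
      by_cases hij : i = j
      · rw [hij, Equiv.swap_self, Equiv.refl_apply]
      · have hw : ¬(φ w = i ∨ φ w = j) := fun hw => hsw ⟨hij, hw⟩
        obtain rfl := eq_of_kempeSubgraph_reachable hw hr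
        obtain ⟨hwi, hwj⟩ := not_or.mp hw
        exact Equiv.swap_apply_of_ne_of_ne hwi hwj
    · exact (h v).2 hr

lemma KempeEquiv.exists_perm_of_isFrozen {φ ψ : G.Coloring (Fin k)} (hφ : IsFrozen G φ)
    (h : KempeEquiv G k φ ψ) : ∃ σ : Equiv.Perm (Fin k), ⇑ψ = σ ∘ φ := by
  have step : ∀ ρ ρ' : G.Coloring (Fin k), IsKempeSwap G ρ ρ' →
      (∃ σ : Equiv.Perm (Fin k), ⇑ρ = σ ∘ φ) → ∃ σ : Equiv.Perm (Fin k), ⇑ρ' = σ ∘ φ := by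
    rintro ρ ρ' hs ⟨σ, hσ⟩
    obtain ⟨τ, hτ⟩ := hs.exists_perm_of_isFrozen (hσ ▸ hφ.perm_comp σ)
    exact ⟨τ * σ, by rw [hτ, hσ]; rfl⟩
  suffices ∀ ρ ρ', KempeEquiv G k ρ ρ' →
      ((∃ σ : Equiv.Perm (Fin k), ⇑ρ = σ ∘ φ) ↔ ∃ σ : Equiv.Perm (Fin k), ⇑ρ' = σ ∘ φ) from
    (this φ ψ h).1 ⟨1, rfl⟩
  intro ρ ρ' h
  induction h with
  | rel _ _ hs => exact ⟨step _ _ hs, step _ _ hs.symm⟩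
  | refl => rfl
  | symm _ _ _ ih => exact ih.symm
  | trans _ _ _ _ _ ih₁ ih₂ => exact ih₁.trans ih₂

lemma two_le_Kc_of_not_kempeEquiv [Finite V] {φ ψ : G.Coloring (Fin k)}
    (h : ¬KempeEquiv G k φ ψ) : 2 ≤ Kc G k := by
  have : Nontrivial (Quot (KempeEquiv G k)) :=
    ⟨⟨Quot.mk _ φ, Quot.mk _ ψ, fun e => h ((Relation.EqvGen.is_equivalence _).eqvGen_iff.mp
      (Quot.eqvGen_exact e))⟩⟩
  exact Finite.one_lt_card_iff_nontrivial.mpr this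

lemma two_le_Kc_of_isFrozen [Finite V] {n : ℕ} (φ : G.Coloring (Fin k)) (hφ : IsFrozen G φ)
    (hsurj : Function.Surjective φ) (hcol : G.Colorable n) (hnk : n < k) : 2 ≤ Kc G k := by
  obtain ⟨c⟩ := hcol
  refine two_le_Kc_of_not_kempeEquiv (φ := φ) (ψ := G.recolorOfEmbedding (Fin.castLEEmb hnk.le) c)
    fun h => ?_
  obtain ⟨σ, hσ⟩ := h.exists_perm_of_isFrozen hφ
  obtain ⟨v, hv⟩ := (hσ ▸ σ.surjective.comp hsurj : Function.Surjective _) ⟨n, hnk⟩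
  exact (c v).isLt.ne (by simpa [Fin.ext_iff] using hv)

end Frozen

def hatH : SimpleGraph (Fin 9) :=
  fromRel fun u v => (u, v) ∈ ([(0, 3), (0, 6), (0, 7), (0, 8), (1, 3), (1, 4), (1, 5), (1, 7),
    (2, 4), (2, 5), (2, 6), (2, 8), (3, 5), (3, 6), (3, 8), (4, 6), (4, 7), (4, 8), (5, 7),
    (5, 8), (6, 7)] : List (Fin 9 × Fin 9))

instance : DecidableRel hatH.Adj := inferInstanceAs (DecidableRel (fromRel _).Adj)

def hatφ : hatH.Coloring (Fin 4) := Coloring.mk ![0, 0, 0, 1, 1, 2, 2, 3, 3] (by decide)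

def hatψ : hatH.Coloring (Fin 3) := Coloring.mk ![0, 1, 2, 2, 0, 0, 1, 2, 1] (by decide)

lemma isFrozen_hatφ : IsFrozen hatH hatφ := by
  unfold IsFrozen
  decide

lemma surjective_hatφ : Function.Surjective hatφ := by decide

lemma chromaticNumber_hatH : hatH.chromaticNumber = 3 :=
  le_antisymm hatψ.colorable.chromaticNumber_le
    (le_chromaticNumber_of_pairwise_adj (by simp) ![0, 3, 6] (by unfold Pairwise; decide))

/-- There is a graph `Ĥ` on 9 vertices with `Kc(Ĥ, χ(Ĥ)+1) ≥ 2`. -/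
theorem stmt3 :
    ∃ (H : SimpleGraph (Fin 9)) (n : ℕ),
      H.chromaticNumber = n ∧ 2 ≤ Kc H (n + 1) :=
  ⟨hatH, 3, chromaticNumber_hatH,
    two_le_Kc_of_isFrozen hatφ isFrozen_hatφ surjective_hatφ hatψ.colorable (by norm_num)⟩
end

section
/- Let H = K₃ × K₄ be the categorical (tensor) product of the complete graphs K₃ and K₄, i.e., the graph on pairs (i, j) with i ∈ {1,2,3} and j ∈ {1,2,3,4} in which (i₁, j₁) is adjacent to (i₂, j₂) if and only if i₁ ≠ i₂ and j₁ ≠ j₂. Then the chromatic number of H equals 3 and Kc(H, 4) ≥ 2. -/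
open SimpleGraph

/-- `K₃ × K₄`: the categorical (tensor) product of complete graphs, on
`Fin 3 × Fin 4`, where `(i₁,j₁)` is adjacent to `(i₂,j₂)` iff `i₁ ≠ i₂` and `j₁ ≠ j₂`. -/
def Htensor : SimpleGraph (Fin 3 × Fin 4) where
  Adj p q := p.1 ≠ q.1 ∧ p.2 ≠ q.2
  symm := ⟨fun p q h => ⟨h.1.symm, h.2.symm⟩⟩
  loopless := ⟨fun p h => h.1 rfl⟩

/-- The vertices of `Ĥ`: pairs `(i,j)` with `i ∈ Fin 3`, `j ∈ Fin 4`, excluding the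
three "diagonal" pairs (which correspond to `(1,1), (2,2), (3,3)` in the 1-indexed
description). -/
abbrev HhatVert : Type := {p : Fin 3 × Fin 4 // (p.1 : ℕ) ≠ (p.2 : ℕ)}

/-- The graph `Ĥ`, i.e. `K₃ × K₄` with the three diagonal vertices deleted. -/
def Hhat : SimpleGraph HhatVert where
  Adj p q := p.1.1 ≠ q.1.1 ∧ p.1.2 ≠ q.1.2
  symm := ⟨fun p q h => ⟨h.1.symm, h.2.symm⟩⟩
  loopless := ⟨fun p h => h.1 rfl⟩

/-!
A proper 4-coloring of `K₃ × K₄` that is constant on the columns `{(x, c) | x ∈ Fin 3}` must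
give distinct columns distinct colors. For any two colors `i ≠ j` the two columns carrying them
induce `K₃,₃` minus a perfect matching, a 6-cycle, so every `i,j`-Kempe swap either recolors
nothing or interchanges `i` and `j` everywhere; the result is again constant on columns.
Hence the colorings by columns form a union of Kempe classes, and the coloring by rows lies
outside it. The coloring by rows also shows `χ ≤ 3`, and the diagonal is a triangle.
-/

section Kempe

variable {V : Type*} {G : SimpleGraph V} {k : ℕ}

lemma kempeSubgraph_reachable_eq_or_mem {φ : V → Fin k} {i j : Fin k} {w v : V}
    (h : (kempeSubgraph G φ i j).Reachable w v) : v = w ∨ φ w = i ∨ φ w = j := by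
  obtain ⟨p⟩ := h
  cases p with
  | nil => exact Or.inl rfl
  | cons hadj _ => exact Or.inr hadj.2.1

lemma IsKempeSwap.exists_perm {φ ψ : G.Coloring (Fin k)}
    (hφ : ∀ i j, i ≠ j → ∀ u v, (φ u = i ∨ φ u = j) → (φ v = i ∨ φ v = j) →
      (kempeSubgraph G (fun x => φ x) i j).Reachable u v)
    (h : IsKempeSwap G φ ψ) : ∃ σ : Equiv.Perm (Fin k), ∀ v, ψ v = σ (φ v) := by
  obtain ⟨i, j, w, h⟩ := h
  by_cases hw : φ w = i ∨ φ w = j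
  · refine ⟨Equiv.swap i j, fun v => ?_⟩
    by_cases hr : (kempeSubgraph G (fun x => φ x) i j).Reachable w v
    · exact (h v).1 hr
    · rw [(h v).2 hr]
      by_cases hij : i = j
      · rw [hij, Equiv.swap_self, Equiv.refl_apply]
      · have hv := not_or.mp fun hv => hr (hφ i j hij w v hw hv)
        exact (Equiv.swap_apply_of_ne_of_ne hv.1 hv.2).symm
  · refine ⟨1, fun v => ?_⟩
    by_cases hr : (kempeSubgraph G (fun x => φ x) i j).Reachable w v
    · obtain rfl := (kempeSubgraph_reachable_eq_or_mem hr).resolve_right hw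
      have hw := not_or.mp hw
      rw [(h v).1 hr, Equiv.swap_apply_of_ne_of_ne hw.1 hw.2, Equiv.Perm.one_apply]
    · exact (h v).2 hr

lemma KempeEquiv.iff_of_isKempeSwap {P : G.Coloring (Fin k) → Prop}
    (hP : ∀ φ ψ, P φ → IsKempeSwap G φ ψ → P ψ) {φ ψ : G.Coloring (Fin k)}
    (h : KempeEquiv G k φ ψ) : P φ ↔ P ψ := by
  induction h with
  | rel φ ψ hswap => exact ⟨fun hφ => hP φ ψ hφ hswap, fun hψ => hP ψ φ hψ hswap.symm⟩
  | refl => exact Iff.rfl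
  | symm _ _ _ ih => exact ih.symm
  | trans _ _ _ _ _ ih₁ ih₂ => exact ih₁.trans ih₂

end Kempe

section Htensor

def IsColumnColoring (φ : Htensor.Coloring (Fin 4)) : Prop :=
  ∃ g : Fin 4 → Fin 4, ∀ v, φ v = g v.2

lemma reachable_of_adj_columns {K : SimpleGraph (Fin 3 × Fin 4)} {c d : Fin 4}
    (hK : ∀ x y : Fin 3, x ≠ y → K.Adj (x, c) (y, d)) (p : Fin 3 × Fin 4)
    (hp : p.2 = c ∨ p.2 = d) : K.Reachable (0, c) p := by
  have hK' : ∀ x y : Fin 3, x ≠ y → K.Adj (x, d) (y, c) := fun x y hxy =>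
    (hK y x hxy.symm).symm
  obtain ⟨y, e⟩ := p
  obtain rfl | rfl := hp <;> fin_cases y
  · rfl
  · exact (hK 0 2 (by decide)).reachable.trans (hK' 2 1 (by decide)).reachable
  · exact (hK 0 1 (by decide)).reachable.trans (hK' 1 2 (by decide)).reachable
  · exact ((hK 0 1 (by decide)).reachable.trans (hK' 1 2 (by decide)).reachable).trans
      (hK 2 0 (by decide)).reachable
  · exact (hK 0 1 (by decide)).reachable
  · exact (hK 0 2 (by decide)).reachable

lemma IsColumnColoring.kempeSubgraph_reachable {φ : Htensor.Coloring (Fin 4)}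
    (hφ : IsColumnColoring φ) {i j : Fin 4} (hij : i ≠ j) (u v : Fin 3 × Fin 4)
    (hu : φ u = i ∨ φ u = j) (hv : φ v = i ∨ φ v = j) :
    (kempeSubgraph Htensor (fun x => φ x) i j).Reachable u v := by
  obtain ⟨g, hg⟩ := hφ
  have hg_inj : g.Injective := fun a b hab => by
    by_contra hne
    have hadj : Htensor.Adj ((0 : Fin 3), a) (1, b) := ⟨Fin.zero_ne_one, hne⟩
    exact φ.valid hadj ((hg (0, a)).trans <| hab.trans (hg (1, b)).symm)
  obtain ⟨c, hc⟩ := (Finite.surjective_of_injective hg_inj) i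
  obtain ⟨d, hd⟩ := (Finite.surjective_of_injective hg_inj) j
  have hcol : ∀ p : Fin 3 × Fin 4, (φ p = i ∨ φ p = j) → p.2 = c ∨ p.2 = d := by
    intro p hp
    rw [hg, ← hc, ← hd] at hp
    exact hp.imp (@hg_inj _ _) (@hg_inj _ _)
  have hcross : ∀ x y : Fin 3, x ≠ y →
      (kempeSubgraph Htensor (fun x => φ x) i j).Adj (x, c) (y, d) := fun x y hxy =>
    ⟨⟨hxy, fun hcd => hij (hc ▸ hd ▸ congrArg g hcd)⟩, Or.inl ((hg _).trans hc),
      Or.inr ((hg _).trans hd)⟩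
  exact (reachable_of_adj_columns hcross u (hcol u hu)).symm.trans
    (reachable_of_adj_columns hcross v (hcol v hv))

lemma IsColumnColoring.of_isKempeSwap {φ ψ : Htensor.Coloring (Fin 4)}
    (hφ : IsColumnColoring φ) (h : IsKempeSwap Htensor φ ψ) : IsColumnColoring ψ := by
  obtain ⟨σ, hσ⟩ := h.exists_perm fun _ _ hij => hφ.kempeSubgraph_reachable hij
  obtain ⟨g, hg⟩ := hφ
  exact ⟨σ ∘ g, fun v => by rw [hσ, hg, Function.comp_apply]⟩

def Htensor.rowColoring : Htensor.Coloring (Fin 4) :=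
  Coloring.mk (fun v => Fin.castSucc v.1) fun h hc => h.1 (Fin.castSucc_injective _ hc)

def Htensor.columnColoring : Htensor.Coloring (Fin 4) :=
  Coloring.mk Prod.snd fun h => h.2

lemma Htensor.isColumnColoring_columnColoring : IsColumnColoring Htensor.columnColoring :=
  ⟨id, fun _ => rfl⟩

lemma Htensor.not_isColumnColoring_rowColoring : ¬IsColumnColoring Htensor.rowColoring := by
  rintro ⟨g, hg⟩
  exact absurd ((hg (0, 0)).trans (hg (1, 0)).symm) (by decide)

lemma Htensor.chromaticNumber_eq_three : Htensor.chromaticNumber = 3 := by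
  refine le_antisymm ?_ ?_
  · exact chromaticNumber_le_iff_colorable.mpr ⟨Coloring.mk Prod.fst fun h => h.1⟩
  · have diagonal : (⊤ : SimpleGraph (Fin 3)) →g Htensor :=
      ⟨fun x => (x, Fin.castSucc x), fun hxy => ⟨hxy, (Fin.castSucc_injective _).ne hxy⟩⟩
    simpa using chromaticNumber_mono_of_hom diagonal

lemma Htensor.two_le_Kc_four : 2 ≤ Kc Htensor 4 := by
  let isColumnClass : Quot (KempeEquiv Htensor 4) → Prop :=
    Quot.lift IsColumnColoring fun _ _ h =>
      propext (KempeEquiv.iff_of_isKempeSwap (fun _ _ => IsColumnColoring.of_isKempeSwap) h)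
  have hne : Quot.mk _ Htensor.rowColoring ≠ Quot.mk _ Htensor.columnColoring := fun h =>
    Htensor.not_isColumnColoring_rowColoring
      ((congrArg isColumnClass h).mpr Htensor.isColumnColoring_columnColoring)
  have : Finite (Htensor.Coloring (Fin 4)) := Finite.of_injective _ DFunLike.coe_injective
  have : Nontrivial (Quot (KempeEquiv Htensor 4)) := ⟨⟨_, _, hne⟩⟩
  exact Finite.one_lt_card

end Htensor

/-- `H = K₃ × K₄` has chromatic number 3 and at least two Kempe equivalence classes
of 4-colorings. -/
theorem stmt5 : Htensor.chromaticNumber = 3 ∧ 2 ≤ Kc Htensor 4 :=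
  ⟨Htensor.chromaticNumber_eq_three, Htensor.two_le_Kc_four⟩
end
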